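/- arXiv:2105.01349 — 2 statements merged into one kernel-verified Lean document; each statement's English description precedes it below -/
import Mathlib

section
/- Convergence of wave tails to the coexistence state at −∞ (Lemma 3.4). Assume b > 1 and ab < 1. Let (φ, ψ) be a pair of C¹ functions solving the wave-profile system (TWS) on all of ℝ with 0 ≤ φ ≤ 1 and 0 ≤ ψ ≤ b − 1, and suppose liminf_{z→−∞} φ(z) ≥ 1 − a(b−1) and liminf_{z→−∞} ψ(z) ≥ (b−1)(1−ab). Then φ(z) → u_* and ψ(z) → v_* as z → −∞, where (u_*, v_*) := ((1+a)/(1+ab), (b−1)/(1+ab)). -/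
/-!
Along a sequence `zₙ → -∞` on which `φ` tends to its upper limit `B` while `φ' → 0` (obtained by
maximising `φ` minus a small quadratic penalty around almost maximal points), the `φ`-equation
passes to the limit. The nonlocal term has a cluster value at most `B`, so `B ≤ 1 - a · liminf ψ`.
The same at the lower limit and for `ψ` gives, for the lower and upper limits `A ≤ B` of `φ` and
`C ≤ D` of `ψ`, the inequalities `B + a C ≤ 1 ≤ A + a D` and `D + 1 ≤ b B`, `b A ≤ C + 1`.
Hence `B - A ≤ a (D - C) ≤ a b (B - A)`, and `a b < 1` forces `A = B` and `C = D`; the limits then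
solve the linear system defining the coexistence state.
-/

open MeasureTheory Filter Topology

def KernelGood (J : ℝ → ℝ) : Prop :=
  Continuous J ∧ (∀ y, 0 ≤ J y) ∧ HasCompactSupport J ∧
    (∫ y : ℝ, J y) = 1 ∧ (∀ y, J (-y) = J y)

def AlphaGood (α : ℝ → ℝ) : Prop :=
  Continuous α ∧ Monotone α ∧
    (∃ L : ℝ, L < 0 ∧ Tendsto α atBot (nhds L)) ∧
    Tendsto α atTop (nhds 1)

/-- The wave-profile system (TWS): `φ, ψ` are C¹, bounded, and satisfy the
nonlocal profile equations on all of ℝ. -/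
def IsTWS (d₁ d₂ r₁ r₂ a b s : ℝ) (J₁ J₂ α φ ψ : ℝ → ℝ) : Prop :=
  ContDiff ℝ 1 φ ∧ ContDiff ℝ 1 ψ ∧
  (∃ M : ℝ, ∀ z, |φ z| ≤ M) ∧ (∃ M : ℝ, ∀ z, |ψ z| ≤ M) ∧
  (∀ z : ℝ, s * deriv φ z =
    d₁ * ((∫ y : ℝ, J₁ (z - y) * φ y) - φ z) +
      r₁ * φ z * (α (-z) - φ z - a * ψ z)) ∧
  (∀ z : ℝ, s * deriv ψ z =
    d₂ * ((∫ y : ℝ, J₂ (z - y) * ψ y) - ψ z) +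
      r₂ * ψ z * (-1 + b * φ z - ψ z))

open Set

section Bounded

variable {f : ℝ → ℝ} {M : ℝ}

lemma isBoundedUnder_of_abs_le (h : ∀ z, |f z| ≤ M) (l : Filter ℝ) :
    l.IsBoundedUnder (· ≤ ·) f ∧ l.IsBoundedUnder (· ≥ ·) f :=
  isBoundedUnder_le_abs.1 (isBoundedUnder_of ⟨M, h⟩)

lemma mem_Icc_liminf_limsup_of_tendsto_comp (h : ∀ z, |f z| ≤ M) {w : ℕ → ℝ}
    (hw : Tendsto w atTop atBot) {p : ℝ} (hp : Tendsto (f ∘ w) atTop (𝓝 p)) :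
    p ∈ Icc (liminf f atBot) (limsup f atBot) := by
  obtain ⟨hle, hge⟩ := isBoundedUnder_of_abs_le h atBot
  obtain ⟨hle', hge'⟩ := isBoundedUnder_of_abs_le h (map w atTop)
  constructor
  · rw [← hp.liminf_eq]
    exact hw.liminf_le_liminf_comp hle'.isCoboundedUnder_ge hge
  · rw [← hp.limsup_eq]
    exact hw.limsup_comp_le_limsup hge'.isCoboundedUnder_le hle

end Bounded

section Fluctuation

variable {f : ℝ → ℝ}

/-- `c` maximises `f z - K (z - w)²` on `[w - 1, w + 1]`. -/
theorem exists_le_deriv_sq_le_of_le_add (hf : Differentiable ℝ f) {w δ K : ℝ} (hK : 0 < K)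
    (hδK : δ < K) (hle : ∀ z ∈ Icc (w - 1) (w + 1), f z ≤ f w + δ) :
    ∃ c ∈ Icc (w - 1) (w + 1), f w ≤ f c ∧ deriv f c ^ 2 ≤ 4 * K * δ := by
  set g : ℝ → ℝ := fun z => f z - K * (z - w) ^ 2
  have hg_cont : Continuous g := hf.continuous.sub (by fun_prop)
  obtain ⟨c, hc, hmax⟩ := isCompact_Icc.exists_isMaxOn
    (nonempty_Icc.2 (by linarith : w - 1 ≤ w + 1)) hg_cont.continuousOn
  have hgc : f w ≤ f c - K * (c - w) ^ 2 := by
    simpa [g] using hmax (show w ∈ Icc (w - 1) (w + 1) from ⟨by linarith, by linarith⟩)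
  have hpen : K * (c - w) ^ 2 ≤ δ := by linarith [hle c hc]
  have hc' : c ∈ Ioo (w - 1) (w + 1) := by
    have : |c - w| < 1 := (sq_lt_one_iff_abs_lt_one _).1 (by nlinarith)
    obtain ⟨h₁, h₂⟩ := abs_lt.1 this
    constructor <;> linarith
  have hderiv : deriv f c = 2 * K * (c - w) := by
    have hg : HasDerivAt g (deriv f c - K * (2 * (c - w))) c := by
      have := (hf c).hasDerivAt.sub ((((hasDerivAt_id c).sub_const w).pow 2).const_mul K)
      simp only [id_eq, Nat.cast_ofNat, pow_one, mul_one, Nat.add_one_sub_one] at this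
      exact this
    have := (hmax.isLocalMax (Icc_mem_nhds hc'.1 hc'.2)).hasDerivAt_eq_zero hg
    linarith
  refine ⟨c, hc, by nlinarith [sq_nonneg (c - w)], ?_⟩
  rw [hderiv]
  nlinarith

theorem frequently_abs_sub_limsup_le_and_abs_deriv_le (hf : Differentiable ℝ f) {M : ℝ}
    (hM : ∀ z, |f z| ≤ M) {ε : ℝ} (hε : 0 < ε) :
    ∃ᶠ z in atBot, |f z - limsup f atBot| ≤ ε ∧ |deriv f z| ≤ ε := by
  set L := limsup f atBot
  obtain ⟨hle, hge⟩ := isBoundedUnder_of_abs_le hM atBot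
  obtain ⟨Z₁, hZ₁⟩ := eventually_atBot.1 (eventually_lt_of_limsup_lt
    (show L < L + ε / 8 by linarith) hle)
  refine frequently_atBot.2 fun Z => ?_
  obtain ⟨w, hw, hfw⟩ := frequently_atBot.1 (frequently_lt_of_lt_limsup hge.isCoboundedUnder_le
    (show L - ε / 8 < L by linarith)) (min Z₁ Z - 1)
  have hwZ := min_le_left Z₁ Z
  -- `f ≤ f w + ε / 4` near `w`, and the penalty `K = ε` then gives `f'² ≤ ε²`.
  obtain ⟨c, hc, hfc, hdc⟩ := exists_le_deriv_sq_le_of_le_add hf (w := w) (δ := ε / 4) hε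
    (by linarith) fun z hz => by linarith [hZ₁ z (by linarith [hz.2])]
  refine ⟨c, by linarith [hc.2, min_le_right Z₁ Z], abs_le.2 ⟨by linarith, ?_⟩,
    abs_le_of_sq_le_sq (by linarith) hε.le⟩
  linarith [hZ₁ c (by linarith [hc.2])]

theorem frequently_abs_sub_liminf_le_and_abs_deriv_le (hf : Differentiable ℝ f) {M : ℝ}
    (hM : ∀ z, |f z| ≤ M) {ε : ℝ} (hε : 0 < ε) :
    ∃ᶠ z in atBot, |f z - liminf f atBot| ≤ ε ∧ |deriv f z| ≤ ε := by
  obtain ⟨hle, hge⟩ := isBoundedUnder_of_abs_le hM atBot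
  have hneg : limsup (-f) atBot = -liminf f atBot :=
    (monotone_id.neg.map_liminf_of_continuousAt f continuous_neg.continuousAt
      hle.isCoboundedUnder_ge hge).symm
  have := frequently_abs_sub_limsup_le_and_abs_deriv_le hf.neg (fun z => (abs_neg (f z)).trans_le
    (hM z)) hε
  rw [hneg, deriv.neg'] at this
  refine this.mono fun z hz => ?_
  rwa [Pi.neg_apply, ← neg_add', abs_neg, abs_neg, ← sub_eq_add_neg] at hz

theorem exists_seq_tendsto_of_frequently {f g : ℝ → ℝ} {a b : ℝ}
    (h : ∀ ε > 0, ∃ᶠ z in atBot, |f z - a| ≤ ε ∧ |g z - b| ≤ ε) :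
    ∃ w : ℕ → ℝ, Tendsto w atTop atBot ∧ Tendsto (f ∘ w) atTop (𝓝 a) ∧
      Tendsto (g ∘ w) atTop (𝓝 b) := by
  choose w hwZ hfw hgw using fun n : ℕ =>
    frequently_atBot.1 (h (1 / (n + 1)) Nat.one_div_pos_of_nat) (-n)
  refine ⟨w, tendsto_atBot_mono hwZ (tendsto_neg_atTop_atBot.comp tendsto_natCast_atTop_atTop),
    ?_, ?_⟩
  · exact tendsto_sub_nhds_zero_iff.1
      (squeeze_zero_norm hfw tendsto_one_div_add_atTop_nhds_zero_nat)
  · exact tendsto_sub_nhds_zero_iff.1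
      (squeeze_zero_norm hgw tendsto_one_div_add_atTop_nhds_zero_nat)

end Fluctuation

section Kernel

variable {J : ℝ → ℝ}

lemma integrable_kernel_mul (hJ : Continuous J) (hJs : HasCompactSupport J) {f : ℝ → ℝ}
    (hf : Continuous f) (z : ℝ) : Integrable fun y => J (z - y) * f y :=
  ((hJ.comp (continuous_const.sub continuous_id)).mul hf).integrable_of_hasCompactSupport
    (hJs.comp_homeomorph (Homeomorph.subLeft z)).mul_right

lemma integral_kernel_mul_const (hJ1 : ∫ y, J y = 1) (A z : ℝ) :
    ∫ y, J (z - y) * A = A := by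
  rw [integral_mul_const, integral_sub_left_eq_self J volume z, hJ1, one_mul]

lemma abs_integral_kernel_mul_le (hJ : Continuous J) (hJ0 : ∀ y, 0 ≤ J y)
    (hJs : HasCompactSupport J) (hJ1 : ∫ y, J y = 1) {f : ℝ → ℝ} {M : ℝ} (hM : ∀ z, |f z| ≤ M)
    (z : ℝ) : |∫ y, J (z - y) * f y| ≤ M := by
  refine (norm_integral_le_of_norm_le (f := fun y => J (z - y) * f y)
    (g := fun y => J (z - y) * M)
    (integrable_kernel_mul hJ hJs continuous_const z) (Eventually.of_forall fun y => ?_)).trans_eq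
    (integral_kernel_mul_const hJ1 M z)
  rw [Real.norm_eq_abs, abs_mul, abs_of_nonneg (hJ0 _)]
  exact mul_le_mul_of_nonneg_left (hM y) (hJ0 _)

lemma eventually_integral_kernel_mul_le (hJ : Continuous J) (hJ0 : ∀ y, 0 ≤ J y)
    (hJs : HasCompactSupport J) {f g : ℝ → ℝ} (hf : Continuous f) (hg : Continuous g)
    (hfg : ∀ᶠ z in atBot, f z ≤ g z) :
    ∀ᶠ z in atBot, ∫ y, J (z - y) * f y ≤ ∫ y, J (z - y) * g y := by
  obtain ⟨Z, hZ⟩ := eventually_atBot.1 hfg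
  obtain ⟨R, hR⟩ := hJs.isCompact.isBounded.subset_closedBall 0
  refine eventually_atBot.2 ⟨Z - R, fun z hz => integral_mono (integrable_kernel_mul hJ hJs hf z)
    (integrable_kernel_mul hJ hJs hg z) fun y => ?_⟩
  by_cases hy : y ≤ Z
  · exact mul_le_mul_of_nonneg_left (hZ y hy) (hJ0 _)
  · have hzy : z - y ∉ tsupport J := fun h => by
      have := (abs_le.1 (mem_closedBall_zero_iff.1 (hR h))).1
      linarith
    simp [image_eq_zero_of_notMem_tsupport hzy]

lemma limsup_integral_kernel_mul_le (hJ : Continuous J) (hJ0 : ∀ y, 0 ≤ J y)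
    (hJs : HasCompactSupport J) (hJ1 : ∫ y, J y = 1) {f : ℝ → ℝ} (hf : Continuous f) {M : ℝ}
    (hM : ∀ z, |f z| ≤ M) :
    limsup (fun z => ∫ y, J (z - y) * f y) atBot ≤ limsup f atBot := by
  have hK := abs_integral_kernel_mul_le hJ hJ0 hJs hJ1 hM
  refine le_of_forall_gt_imp_ge_of_dense fun A hA =>
    limsup_le_of_le (isBoundedUnder_of_abs_le hK _).2.isCoboundedUnder_le ?_
  have hfA : ∀ᶠ z in atBot, f z ≤ A := (eventually_lt_of_limsup_lt hA
    (isBoundedUnder_of_abs_le hM _).1).mono fun _ => le_of_lt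
  simpa only [integral_kernel_mul_const hJ1] using
    eventually_integral_kernel_mul_le hJ hJ0 hJs hf continuous_const hfA

lemma le_liminf_integral_kernel_mul (hJ : Continuous J) (hJ0 : ∀ y, 0 ≤ J y)
    (hJs : HasCompactSupport J) (hJ1 : ∫ y, J y = 1) {f : ℝ → ℝ} (hf : Continuous f) {M : ℝ}
    (hM : ∀ z, |f z| ≤ M) :
    liminf f atBot ≤ liminf (fun z => ∫ y, J (z - y) * f y) atBot := by
  have hK := abs_integral_kernel_mul_le hJ hJ0 hJs hJ1 hM
  refine le_of_forall_lt_imp_le_of_dense fun A hA =>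
    le_liminf_of_le (isBoundedUnder_of_abs_le hK _).1.isCoboundedUnder_ge ?_
  have hfA : ∀ᶠ z in atBot, A ≤ f z := (eventually_lt_of_lt_liminf hA
    (isBoundedUnder_of_abs_le hM _).2).mono fun _ => le_of_lt
  simpa only [integral_kernel_mul_const hJ1] using
    eventually_integral_kernel_mul_le hJ hJ0 hJs continuous_const hf hfA

end Kernel

section ProfileEquation

variable {J β f g : ℝ → ℝ} {d r s c β₀ M N : ℝ}

/-- `p` and `v` are the limits of `J ∗ f` and `g` along a subsequence of `w`. -/
theorem exists_limit_relation_of_profile_eq (hJ : Continuous J) (hJ0 : ∀ y, 0 ≤ J y)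
    (hJs : HasCompactSupport J) (hJ1 : ∫ y, J y = 1) (hf : Continuous f) (hM : ∀ z, |f z| ≤ M)
    (hN : ∀ z, |g z| ≤ N) (hβ : Tendsto β atBot (𝓝 β₀))
    (heq : ∀ z, s * deriv f z =
      d * ((∫ y, J (z - y) * f y) - f z) + r * f z * (β z + c * g z - f z))
    {w : ℕ → ℝ} (hw : Tendsto w atTop atBot) {L : ℝ} (hfw : Tendsto (f ∘ w) atTop (𝓝 L))
    (hf'w : Tendsto (deriv f ∘ w) atTop (𝓝 0)) :
    ∃ p ∈ Icc (liminf f atBot) (limsup f atBot), ∃ v ∈ Icc (liminf g atBot) (limsup g atBot),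
      d * (p - L) + r * L * (β₀ + c * v - L) = 0 := by
  set K : ℝ → ℝ := fun z => ∫ y, J (z - y) * f y
  have hK : ∀ z, |K z| ≤ M := abs_integral_kernel_mul_le hJ hJ0 hJs hJ1 hM
  obtain ⟨⟨p, v⟩, -, σ, hσ, hpv⟩ := tendsto_subseq_of_bounded (x := fun n => (K (w n), g (w n)))
    (Metric.isBounded_closedBall (x := 0) (r := max M N)) fun n => by
      rw [mem_closedBall_zero_iff, Prod.norm_def, Real.norm_eq_abs, Real.norm_eq_abs]
      exact max_le_max (hK _) (hN _)
  have hwσ : Tendsto (w ∘ σ) atTop atBot := hw.comp hσ.tendsto_atTop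
  have hKp : Tendsto (K ∘ w ∘ σ) atTop (𝓝 p) := (continuous_fst.tendsto _).comp hpv
  have hgv : Tendsto (g ∘ w ∘ σ) atTop (𝓝 v) := (continuous_snd.tendsto _).comp hpv
  have hfL : Tendsto (f ∘ w ∘ σ) atTop (𝓝 L) := hfw.comp hσ.tendsto_atTop
  refine ⟨p, ?_, v, mem_Icc_liminf_limsup_of_tendsto_comp hN hwσ hgv, ?_⟩
  · exact Icc_subset_Icc (le_liminf_integral_kernel_mul hJ hJ0 hJs hJ1 hf hM)
      (limsup_integral_kernel_mul_le hJ hJ0 hJs hJ1 hf hM)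
      (mem_Icc_liminf_limsup_of_tendsto_comp hK hwσ hKp)
  · have hrhs : Tendsto (fun n => s * deriv f (w (σ n))) atTop
        (𝓝 (d * (p - L) + r * L * (β₀ + c * v - L))) := by
      simp_rw [heq]
      exact ((hKp.sub hfL).const_mul d).add
        ((hfL.const_mul r).mul (((hβ.comp hwσ).add (hgv.const_mul c)).sub hfL))
    have hlhs : Tendsto (fun n => s * deriv f (w (σ n))) atTop (𝓝 (s * 0)) :=
      (hf'w.comp hσ.tendsto_atTop).const_mul s
    rw [mul_zero] at hlhs
    exact (tendsto_nhds_unique hlhs hrhs).symm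

theorem limsup_le_of_profile_eq (hd : 0 ≤ d) (hr : 0 < r) (hJ : Continuous J)
    (hJ0 : ∀ y, 0 ≤ J y) (hJs : HasCompactSupport J) (hJ1 : ∫ y, J y = 1)
    (hf : Differentiable ℝ f) (hM : ∀ z, |f z| ≤ M) (hN : ∀ z, |g z| ≤ N)
    (hβ : Tendsto β atBot (𝓝 β₀))
    (heq : ∀ z, s * deriv f z =
      d * ((∫ y, J (z - y) * f y) - f z) + r * f z * (β z + c * g z - f z))
    (hpos : 0 < limsup f atBot) :
    ∃ v ∈ Icc (liminf g atBot) (limsup g atBot), limsup f atBot ≤ β₀ + c * v := by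
  obtain ⟨w, hw, hfw, hf'w⟩ := exists_seq_tendsto_of_frequently (g := deriv f) (b := 0)
    fun ε hε => by
      simpa only [sub_zero] using frequently_abs_sub_limsup_le_and_abs_deriv_le hf hM hε
  obtain ⟨p, hp, v, hv, hrel⟩ := exists_limit_relation_of_profile_eq hJ hJ0 hJs hJ1 hf.continuous
    hM hN hβ heq hw hfw hf'w
  exact ⟨v, hv, by nlinarith [mul_pos hr hpos, mul_nonneg hd (sub_nonneg.2 hp.2)]⟩

theorem le_liminf_of_profile_eq (hd : 0 ≤ d) (hr : 0 < r) (hJ : Continuous J)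
    (hJ0 : ∀ y, 0 ≤ J y) (hJs : HasCompactSupport J) (hJ1 : ∫ y, J y = 1)
    (hf : Differentiable ℝ f) (hM : ∀ z, |f z| ≤ M) (hN : ∀ z, |g z| ≤ N)
    (hβ : Tendsto β atBot (𝓝 β₀))
    (heq : ∀ z, s * deriv f z =
      d * ((∫ y, J (z - y) * f y) - f z) + r * f z * (β z + c * g z - f z))
    (hpos : 0 < liminf f atBot) :
    ∃ v ∈ Icc (liminf g atBot) (limsup g atBot), β₀ + c * v ≤ liminf f atBot := by
  obtain ⟨w, hw, hfw, hf'w⟩ := exists_seq_tendsto_of_frequently (g := deriv f) (b := 0)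
    fun ε hε => by
      simpa only [sub_zero] using frequently_abs_sub_liminf_le_and_abs_deriv_le hf hM hε
  obtain ⟨p, hp, v, hv, hrel⟩ := exists_limit_relation_of_profile_eq hJ hJ0 hJs hJ1 hf.continuous
    hM hN hβ heq hw hfw hf'w
  exact ⟨v, hv, by nlinarith [mul_pos hr hpos, mul_nonneg hd (sub_nonneg.2 hp.1)]⟩

end ProfileEquation

theorem coexistence_of_tail_bounds {a b A B C D : ℝ} (ha : 0 ≤ a) (hab : a * b < 1)
    (hAB : A ≤ B) (hCD : C ≤ D) (h₁ : B + a * C ≤ 1) (h₂ : 1 ≤ A + a * D)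
    (h₃ : D + 1 ≤ b * B) (h₄ : b * A ≤ C + 1) :
    B = A ∧ D = C ∧ A = (1 + a) / (1 + a * b) ∧ C = (b - 1) / (1 + a * b) := by
  have hBA : B = A := by
    have : B - A ≤ a * b * (B - A) := by
      nlinarith [mul_le_mul_of_nonneg_left (show D - C ≤ b * (B - A) by linarith) ha]
    exact le_antisymm (by nlinarith) hAB
  rw [hBA] at h₁ h₃
  have hDC : D = C := le_antisymm (by linarith) hCD
  rw [hDC] at h₂ h₃
  have hAC : A + a * C = 1 := le_antisymm h₁ h₂
  have hCA : C = b * A - 1 := by linarith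
  have hA : A * (1 + a * b) = 1 + a := by linear_combination hAC - a * hCA
  have hC : C * (1 + a * b) = b - 1 := by linear_combination (1 + a * b) * hCA + b * hA
  have h1ab : 1 + a * b ≠ 0 := fun h => by rw [h, mul_zero] at hA; linarith
  exact ⟨hBA, hDC, (eq_div_iff h1ab).2 hA, (eq_div_iff h1ab).2 hC⟩

theorem wave_tails_coexistence_at_bot_general
    (d₁ d₂ r₁ r₂ a b s : ℝ)
    (hd₁ : 0 < d₁) (hd₂ : 0 < d₂) (hr₁ : 0 < r₁) (hr₂ : 0 < r₂)
    (ha : 0 < a) (hb : 1 < b) (hab : a * b < 1)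
    (J₁ J₂ α : ℝ → ℝ)
    (hJ₁ : KernelGood J₁) (hJ₂ : KernelGood J₂) (hα : AlphaGood α)
    (φ ψ : ℝ → ℝ)
    (htws : IsTWS d₁ d₂ r₁ r₂ a b s J₁ J₂ α φ ψ)
    (hlifφ : 1 - a * (b - 1) ≤ Filter.liminf φ atBot)
    (hlifψ : (b - 1) * (1 - a * b) ≤ Filter.liminf ψ atBot) :
    Tendsto φ atBot (nhds ((1 + a) / (1 + a * b))) ∧
      Tendsto ψ atBot (nhds ((b - 1) / (1 + a * b))) := by
  obtain ⟨hφC, hψC, ⟨Mφ, hMφ⟩, ⟨Mψ, hMψ⟩, heqφ, heqψ⟩ := htws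
  obtain ⟨hJ₁c, hJ₁0, hJ₁s, hJ₁1, -⟩ := hJ₁
  obtain ⟨hJ₂c, hJ₂0, hJ₂s, hJ₂1, -⟩ := hJ₂
  have hφ := hφC.differentiable one_ne_zero
  have hψ := hψC.differentiable one_ne_zero
  obtain ⟨hφle, hφge⟩ := isBoundedUnder_of_abs_le hMφ atBot
  obtain ⟨hψle, hψge⟩ := isBoundedUnder_of_abs_le hMψ atBot
  have hA : 0 < liminf φ atBot := by nlinarith
  have hC : 0 < liminf ψ atBot := lt_of_lt_of_le (mul_pos (by linarith) (by linarith)) hlifψ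
  have hAB : liminf φ atBot ≤ limsup φ atBot := liminf_le_limsup hφle hφge
  have hCD : liminf ψ atBot ≤ limsup ψ atBot := liminf_le_limsup hψle hψge
  have hα₁ : Tendsto (fun z => α (-z)) atBot (𝓝 1) := hα.2.2.2.comp tendsto_neg_atBot_atTop
  have heqφ' : ∀ z, s * deriv φ z = d₁ * ((∫ y, J₁ (z - y) * φ y) - φ z) +
      r₁ * φ z * (α (-z) + -a * ψ z - φ z) := fun z => by rw [heqφ z]; ring
  obtain ⟨v₁, hv₁, h₁⟩ := limsup_le_of_profile_eq hd₁.le hr₁ hJ₁c hJ₁0 hJ₁s hJ₁1 hφ hMφ hMψ hα₁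
    heqφ' (hA.trans_le hAB)
  obtain ⟨v₂, hv₂, h₂⟩ := le_liminf_of_profile_eq hd₁.le hr₁ hJ₁c hJ₁0 hJ₁s hJ₁1 hφ hMφ hMψ hα₁
    heqφ' hA
  obtain ⟨u₃, hu₃, h₃⟩ := limsup_le_of_profile_eq (β := fun _ => -1) hd₂.le hr₂ hJ₂c hJ₂0 hJ₂s
    hJ₂1 hψ hMψ hMφ tendsto_const_nhds heqψ (hC.trans_le hCD)
  obtain ⟨u₄, hu₄, h₄⟩ := le_liminf_of_profile_eq (β := fun _ => -1) hd₂.le hr₂ hJ₂c hJ₂0 hJ₂s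
    hJ₂1 hψ hMψ hMφ tendsto_const_nhds heqψ hC
  obtain ⟨hBA, hDC, hφlim, hψlim⟩ := coexistence_of_tail_bounds ha.le hab hAB hCD
    (by nlinarith [hv₁.1]) (by nlinarith [hv₂.2]) (by nlinarith [hu₃.2]) (by nlinarith [hu₄.1])
  exact ⟨tendsto_of_liminf_eq_limsup hφlim (hBA.trans hφlim) hφle hφge,
    tendsto_of_liminf_eq_limsup hψlim (hDC.trans hψlim) hψle hψge⟩

/-- Lemma 3.4: convergence of wave tails to the coexistence state at -∞. -/
theorem wave_tails_coexistence_at_bot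
    (d₁ d₂ r₁ r₂ a b s : ℝ)
    (hd₁ : 0 < d₁) (hd₂ : 0 < d₂) (hr₁ : 0 < r₁) (hr₂ : 0 < r₂)
    (ha : 0 < a) (hb : 1 < b) (hs : 0 < s) (hab : a * b < 1)
    (J₁ J₂ α : ℝ → ℝ)
    (hJ₁ : KernelGood J₁) (hJ₂ : KernelGood J₂) (hα : AlphaGood α)
    (φ ψ : ℝ → ℝ)
    (htws : IsTWS d₁ d₂ r₁ r₂ a b s J₁ J₂ α φ ψ)
    (hφ : ∀ z, 0 ≤ φ z ∧ φ z ≤ 1) (hψ : ∀ z, 0 ≤ ψ z ∧ ψ z ≤ b - 1)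
    (hlifφ : 1 - a * (b - 1) ≤ Filter.liminf φ atBot)
    (hlifψ : (b - 1) * (1 - a * b) ≤ Filter.liminf ψ atBot) :
    Tendsto φ atBot (nhds ((1 + a) / (1 + a * b))) ∧
      Tendsto ψ atBot (nhds ((b - 1) / (1 + a * b))) :=
  wave_tails_coexistence_at_bot_general d₁ d₂ r₁ r₂ a b s hd₁ hd₂ hr₁ hr₂ ha hb hab J₁ J₂ α hJ₁ hJ₂
    hα φ ψ htws hlifφ hlifψ
end

section
/- Vanishing behind the climate front, nonlocal case (Theorem 4.3 (i)). Assume b > 1. Let u₀, v₀ be continuous with 0 ≤ u₀ ≤ 1, 0 ≤ v₀ ≤ b−1, and suppose there is a constant K₁ such that u₀(x) = v₀(x) = 0 for all x ≤ K₁. Let (u, v) be a solution of the nonlocal Cauchy problem with these initial data. Then for every ζ > 0: if s ≤ s*, then sup_{x ≤ (s−ζ)t} u(x,t) → 0 as t → +∞ (i.e., for every ε > 0 there is T such that u(x,t) ≤ ε whenever t ≥ T and x ≤ (s−ζ)t); and if s ≤ s_*, then sup_{x ≤ (s−ζ)t} v(x,t) → 0 as t → +∞. -/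
open MeasureTheory Filter Topology

noncomputable def minSpeed (d r : ℝ) (J : ℝ → ℝ) : ℝ :=
  sInf {c : ℝ | ∃ l : ℝ, 0 < l ∧
    c = (d * ((∫ y : ℝ, J y * Real.exp (l * y)) - 1) + r) / l}

/-- A solution of the nonlocal Cauchy problem (pp) with initial data `(u₀, v₀)`:
bounded continuous on ℝ × [0,∞), satisfying the equations pointwise for t > 0,
with 0 ≤ u ≤ 1 and 0 ≤ v ≤ b-1. -/
def IsSolPP (d₁ d₂ r₁ r₂ a b s : ℝ) (J₁ J₂ α : ℝ → ℝ) (u₀ v₀ : ℝ → ℝ)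
    (u v : ℝ → ℝ → ℝ) : Prop :=
  ContinuousOn (fun p : ℝ × ℝ => u p.1 p.2) (Set.univ ×ˢ Set.Ici (0:ℝ)) ∧
  ContinuousOn (fun p : ℝ × ℝ => v p.1 p.2) (Set.univ ×ˢ Set.Ici (0:ℝ)) ∧
  (∀ x t : ℝ, 0 ≤ t → 0 ≤ u x t ∧ u x t ≤ 1) ∧
  (∀ x t : ℝ, 0 ≤ t → 0 ≤ v x t ∧ v x t ≤ b - 1) ∧
  (∀ x : ℝ, u x 0 = u₀ x) ∧ (∀ x : ℝ, v x 0 = v₀ x) ∧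
  (∀ x t : ℝ, 0 < t → HasDerivAt (fun τ => u x τ)
    (d₁ * ((∫ y : ℝ, J₁ (x - y) * u y t) - u x t) +
      r₁ * u x t * (α (x - s * t) - u x t - a * v x t)) t) ∧
  (∀ x t : ℝ, 0 < t → HasDerivAt (fun τ => v x τ)
    (d₂ * ((∫ y : ℝ, J₂ (x - y) * v y t) - v x t) +
      r₂ * v x t * (-1 + b * u x t - v x t)) t)


/-!
Behind the climate front `α (x - s t)` is negative, so there the prey has a negative growth rate.
For small `l > 0` the travelling exponential `e^{l (x - s t - M)}` is then a supersolution of the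
prey equation in that region, and it dominates `u` at `t = 0` because `u₀` vanishes far to the left.
The comparison is a Gronwall estimate for `sup_x (u - ψ)⁺`, which also controls the nonlocal term.
Once `u ≤ 1 / (2 b)` far behind the front, the predator's growth rate `-1 + b u - v` is at most
`-1/2` there, and the same comparison bounds `v`. An exponential in `x - s t` decays along
`x ≤ (s - ζ) t`.
-/

open Set Real

namespace KernelGood

variable {J : ℝ → ℝ}

theorem integrable_mul (hJ : KernelGood J) {f : ℝ → ℝ} (hf : Continuous f) :
    Integrable fun y => J y * f y :=
  (hJ.1.mul hf).integrable_of_hasCompactSupport hJ.2.2.1.mul_right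

theorem integrable_comp_sub_mul (hJ : KernelGood J) {f : ℝ → ℝ} (hf : Continuous f) (x : ℝ) :
    Integrable fun y => J (x - y) * f y :=
  ((hJ.1.comp (continuous_const.sub continuous_id)).mul hf).integrable_of_hasCompactSupport
    (hJ.2.2.1.comp_homeomorph (Homeomorph.subLeft x)).mul_right

theorem integral_comp_sub (hJ : KernelGood J) (x : ℝ) : ∫ y, J (x - y) = 1 := by
  rw [integral_sub_left_eq_self J volume x, hJ.2.2.2.1]

theorem integral_mul_exp_neg (hJ : KernelGood J) (l : ℝ) :
    ∫ y, J y * exp (-(l * y)) = ∫ y, J y * exp (l * y) := by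
  rw [← integral_sub_left_eq_self _ volume 0]
  simp only [zero_sub, hJ.2.2.2.2, mul_neg, neg_neg]

theorem one_le_integral_mul_exp (hJ : KernelGood J) (l : ℝ) :
    1 ≤ ∫ y, J y * exp (l * y) := by
  have hpos := hJ.integrable_mul (f := fun y => exp (l * y)) (by fun_prop)
  have hneg := hJ.integrable_mul (f := fun y => exp (-(l * y))) (by fun_prop)
  -- `e^z + e^{-z} ≥ 2` and the symmetry of `J`
  have hcosh : ∫ y, 2 * J y ≤ ∫ y, (J y * exp (l * y) + J y * exp (-(l * y))) := by
    refine integral_mono ((hJ.1.integrable_of_hasCompactSupport hJ.2.2.1).const_mul 2)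
      (hpos.add hneg) fun y => ?_
    have := cosh_eq (l * y) ▸ one_le_cosh (l * y)
    nlinarith [hJ.2.1 y]
  rw [integral_const_mul, hJ.2.2.2.1, integral_add hpos hneg, hJ.integral_mul_exp_neg] at hcosh
  linarith

theorem continuousAt_integral_mul_exp (hJ : KernelGood J) :
    ContinuousAt (fun l => ∫ y, J y * exp (l * y)) 0 := by
  refine continuousAt_of_dominated (bound := fun y => J y * exp |y|)
    (Eventually.of_forall fun l => (hJ.1.mul (by fun_prop)).aestronglyMeasurable) ?_
    (hJ.integrable_mul (by fun_prop))
    (Eventually.of_forall fun y => by fun_prop)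
  filter_upwards [Icc_mem_nhds (by norm_num : (-1 : ℝ) < 0) (by norm_num : (0 : ℝ) < 1)]
    with l hl
  refine Eventually.of_forall fun y => ?_
  have hly : l * y ≤ |y| := by
    calc l * y ≤ |l| * |y| := (le_abs_self _).trans (abs_mul l y).le
      _ ≤ 1 * |y| := by gcongr; exact abs_le.2 hl
      _ = |y| := one_mul _
  rw [norm_mul, norm_of_nonneg (hJ.2.1 y), norm_of_nonneg (exp_pos _).le]
  exact mul_le_mul_of_nonneg_left (exp_le_exp.2 hly) (hJ.2.1 y)

theorem exists_pos_rate_le (hJ : KernelGood J) (d s : ℝ) {δ : ℝ} (hδ : 0 < δ) :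
    ∃ l, 0 < l ∧ d * ((∫ y, J y * exp (l * y)) - 1) + l * s ≤ δ := by
  have hcont : ContinuousAt (fun l => d * ((∫ y, J y * exp (l * y)) - 1) + l * s) 0 :=
    ((hJ.continuousAt_integral_mul_exp.sub continuousAt_const).const_mul d).add
      (continuousAt_id.mul continuousAt_const)
  have hzero : d * ((∫ y, J y * exp ((0 : ℝ) * y)) - 1) + 0 * s < δ := by
    simpa [hJ.2.2.2.1] using hδ
  have hsmall : ∀ᶠ l in 𝓝[>] 0, d * ((∫ y, J y * exp (l * y)) - 1) + l * s < δ :=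
    nhdsWithin_le_nhds (hcont.eventually (eventually_lt_nhds hzero))
  obtain ⟨l, hl, hl0⟩ := (hsmall.and self_mem_nhdsWithin).exists
  exact ⟨l, hl0, hl.le⟩

theorem integral_comp_sub_mul_exp (hJ : KernelGood J) (l m x : ℝ) :
    ∫ y, J (x - y) * exp (l * (y - m)) = (∫ y, J y * exp (l * y)) * exp (l * (x - m)) := by
  have hshift : ∀ y, J (x - y) * exp (l * (y - m))
      = exp (l * (x - m)) * (fun z => J z * exp (-(l * z))) (x - y) := by
    intro y
    rw [show l * (y - m) = l * (x - m) + -(l * (x - y)) by ring, exp_add]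
    ring
  simp_rw [hshift]
  rw [integral_const_mul, integral_sub_left_eq_self (fun z => J z * exp (-(l * z))) volume x,
    hJ.integral_mul_exp_neg, mul_comm]

theorem integral_comp_sub_mul_le (hJ : KernelGood J) {f : ℝ → ℝ} (hf : Continuous f)
    {C l m c : ℝ} (hfle : ∀ y, f y ≤ C * exp (l * (y - m)) + c) (x : ℝ) :
    ∫ y, J (x - y) * f y ≤ (∫ y, J y * exp (l * y)) * (C * exp (l * (x - m))) + c := by
  have hexp := hJ.integrable_comp_sub_mul (f := fun y => exp (l * (y - m))) (by fun_prop) x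
  have hone := hJ.integrable_comp_sub_mul (f := fun _ => (1 : ℝ)) continuous_const x
  calc ∫ y, J (x - y) * f y
      ≤ ∫ y, (C * (J (x - y) * exp (l * (y - m))) + c * (J (x - y) * 1)) := by
        refine integral_mono (hJ.integrable_comp_sub_mul hf x)
          ((hexp.const_mul C).add (hone.const_mul c)) fun y => ?_
        nlinarith [mul_le_mul_of_nonneg_left (hfle y) (hJ.2.1 (x - y))]
    _ = (∫ y, J y * exp (l * y)) * (C * exp (l * (x - m))) + c := by
        rw [integral_add (hexp.const_mul C) (hone.const_mul c), integral_const_mul,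
          integral_const_mul, hJ.integral_comp_sub_mul_exp]
        simp only [mul_one, hJ.integral_comp_sub]
        ring

end KernelGood

/-- Only the last time before `b` at which `f ≤ 0` matters: after it `f > 0` and the derivative
bound applies. -/
theorem le_integral_of_hasDerivAt_le_of_pos {f f' h : ℝ → ℝ} {a b : ℝ} (hab : a ≤ b)
    (hf : ContinuousOn f (Icc a b)) (hfa : f a ≤ 0)
    (hderiv : ∀ τ ∈ Ioo a b, HasDerivAt f (f' τ) τ)
    (hle : ∀ τ ∈ Ioo a b, 0 < f τ → f' τ ≤ h τ)
    (hh : IntegrableOn h (Icc a b)) (hh0 : ∀ τ ∈ Icc a b, 0 ≤ h τ) :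
    f b ≤ ∫ τ in a..b, h τ := by
  rcases le_or_gt (f b) 0 with hfb | hfb
  · exact hfb.trans (intervalIntegral.integral_nonneg hab hh0)
  set S := Icc a b ∩ f ⁻¹' Iic 0
  have hSbdd : BddAbove S := ⟨b, fun τ hτ => hτ.1.2⟩
  have hSσ : sSup S ∈ S := (hf.preimage_isClosed_of_isClosed isClosed_Icc isClosed_Iic).csSup_mem
    ⟨a, ⟨le_rfl, hab⟩, hfa⟩ hSbdd
  set σ := sSup S
  have hσa : a ≤ σ := hSσ.1.1
  have hfσ : f σ ≤ 0 := hSσ.2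
  have hσb : σ < b := hSσ.1.2.lt_of_ne fun h => (h ▸ hfσ).not_gt hfb
  have hpos : ∀ τ ∈ Ioo σ b, 0 < f τ := fun τ hτ => not_le.1 fun hτ0 =>
    (le_csSup hSbdd ⟨⟨hσa.trans hτ.1.le, hτ.2.le⟩, hτ0⟩).not_gt hτ.1
  have hsub : Icc σ b ⊆ Icc a b := Icc_subset_Icc_left hσa
  have hftc := intervalIntegral.sub_le_integral_of_hasDeriv_right_of_le hσb.le (hf.mono hsub)
    (fun τ hτ => (hderiv τ ⟨hσa.trans_lt hτ.1, hτ.2⟩).hasDerivWithinAt) (hh.mono_set hsub)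
    (fun τ hτ => hle τ ⟨hσa.trans_lt hτ.1, hτ.2⟩ (hpos τ hτ))
  have hmono : ∫ τ in σ..b, h τ ≤ ∫ τ in a..b, h τ :=
    intervalIntegral.integral_mono_interval hσa hσb.le le_rfl
      ((ae_restrict_mem measurableSet_Ioc).mono fun τ hτ => hh0 τ (Ioc_subset_Icc_self hτ))
      ((intervalIntegrable_iff_integrableOn_Icc_of_le hab).2 hh)
  linarith

theorem le_mul_pow_div_factorial_of_le_mul_integral {Z : ℝ → ℝ} {d B : ℝ} (hd : 0 ≤ d)
    (hZint : ∀ t, IntervalIntegrable Z volume 0 t) (hZB : ∀ t, 0 ≤ t → Z t ≤ B)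
    (hZ : ∀ t, 0 ≤ t → Z t ≤ d * ∫ τ in 0..t, Z τ) (n : ℕ) {t : ℝ} (ht : 0 ≤ t) :
    Z t ≤ B * (d * t) ^ n / n.factorial := by
  induction n generalizing t with
  | zero => simpa using hZB t ht
  | succ n ih =>
    have hint : ∫ τ in 0..t, B * (d * τ) ^ n / n.factorial
        = B * d ^ n / n.factorial * (t ^ (n + 1) / (n + 1)) := by
      have hpoly : (fun τ : ℝ => B * (d * τ) ^ n / n.factorial)
          = fun τ => B * d ^ n / n.factorial * τ ^ n := by
        funext τ; rw [mul_pow]; ring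
      rw [hpoly, intervalIntegral.integral_const_mul, integral_pow]
      ring
    calc Z t ≤ d * ∫ τ in 0..t, Z τ := hZ t ht
      _ ≤ d * ∫ τ in 0..t, B * (d * τ) ^ n / n.factorial := by
        gcongr
        exact intervalIntegral.integral_mono_on ht (hZint t)
          ((by fun_prop : Continuous fun τ : ℝ => B * (d * τ) ^ n / n.factorial)
            |>.intervalIntegrable _ _)
          fun τ hτ => ih hτ.1
      _ = B * (d * t) ^ (n + 1) / (n + 1).factorial := by
        rw [hint, Nat.factorial_succ]
        push_cast
        field_simp
        ring

theorem nonpos_of_le_mul_integral {Z : ℝ → ℝ} {d B : ℝ} (hd : 0 ≤ d)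
    (hZint : ∀ t, IntervalIntegrable Z volume 0 t) (hZB : ∀ t, 0 ≤ t → Z t ≤ B)
    (hZ : ∀ t, 0 ≤ t → Z t ≤ d * ∫ τ in 0..t, Z τ) {t : ℝ} (ht : 0 ≤ t) : Z t ≤ 0 := by
  have hlim : Tendsto (fun n : ℕ => B * (d * t) ^ n / n.factorial) atTop (𝓝 0) := by
    simpa only [mul_zero, mul_div_assoc] using
      (FloorSemiring.tendsto_pow_div_factorial_atTop (d * t)).const_mul B
  exact ge_of_tendsto' hlim fun n =>
    le_mul_pow_div_factorial_of_le_mul_integral hd hZint hZB hZ n ht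

/-- Gronwall's inequality for the supremum `Z` of the positive parts of the family. -/
theorem nonpos_of_hasDerivAt_le_mul_iSup {ι : Type*} {g g' : ι → ℝ → ℝ} {d B : ℝ}
    (hd : 0 ≤ d) (hg : ∀ i, ContinuousOn (g i) (Ici 0)) (hgB : ∀ i t, 0 ≤ t → g i t ≤ B)
    (hg0 : ∀ i, g i 0 ≤ 0) (hderiv : ∀ i t, 0 < t → HasDerivAt (g i) (g' i t) t)
    (hle : ∀ i t, 0 < t → 0 < g i t → g' i t ≤ d * ⨆ j, max (g j t) 0)
    (i : ι) {t : ℝ} (ht : 0 ≤ t) : g i t ≤ 0 := by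
  -- `max τ 0` extends `g j` continuously to all times, making `Z` lower semicontinuous
  set Z : ℝ → ℝ := fun τ => ⨆ j, max (g j (max τ 0)) 0
  have hcont : ∀ j, Continuous fun τ => max (g j (max τ 0)) 0 := fun j =>
    ((hg j).comp_continuous (continuous_id.max continuous_const) fun τ => le_max_right τ 0).max
      continuous_const
  have hbdd : ∀ τ, BddAbove (range fun j => max (g j (max τ 0)) 0) := fun τ =>
    ⟨max B 0, by rintro _ ⟨j, rfl⟩; exact max_le_max_right 0 (hgB j _ (le_max_right τ 0))⟩
  have hZ0 : ∀ τ, 0 ≤ Z τ := fun τ => Real.iSup_nonneg fun j => le_max_right _ _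
  have hZB : ∀ τ, Z τ ≤ max B 0 := fun τ => Real.iSup_le
    (fun j => max_le_max_right 0 (hgB j _ (le_max_right τ 0))) (le_max_right B 0)
  have hZ : ∀ τ, 0 ≤ τ → Z τ = ⨆ j, max (g j τ) 0 := fun τ hτ => by simp only [Z, max_eq_left hτ]
  have hgZ : ∀ j τ, 0 ≤ τ → g j τ ≤ Z τ := fun j τ hτ =>
    calc g j τ ≤ max (g j (max τ 0)) 0 := by rw [max_eq_left hτ]; exact le_max_left _ _
      _ ≤ Z τ := le_ciSup (hbdd τ) j
  have hZint : ∀ τ, IntervalIntegrable Z volume 0 τ := fun τ =>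
    (intervalIntegrable_const (c := max B 0)).mono_fun
      ((lowerSemicontinuous_ciSup hbdd fun j => (hcont j).lowerSemicontinuous).measurable
        |>.aestronglyMeasurable.restrict)
      (Eventually.of_forall fun σ => show ‖Z σ‖ ≤ ‖max B 0‖ by
        rw [norm_of_nonneg (hZ0 σ), norm_of_nonneg (le_max_right B 0)]
        exact hZB σ)
  refine (hgZ i t ht).trans
    (nonpos_of_le_mul_integral hd hZint (fun τ _ => hZB τ) (fun τ hτ => ?_) ht)
  have hgrowth : ∀ j, g j τ ≤ ∫ σ in 0..τ, d * Z σ := fun j =>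
    le_integral_of_hasDerivAt_le_of_pos hτ ((hg j).mono Icc_subset_Ici_self) (hg0 j)
      (fun σ hσ => hderiv j σ hσ.1)
      (fun σ hσ hpos => by rw [hZ σ hσ.1.le]; exact hle j σ hσ.1 hpos)
      (((intervalIntegrable_iff_integrableOn_Icc_of_le hτ).1 (hZint τ)).const_mul d)
      (fun σ _ => mul_nonneg hd (hZ0 σ))
  have hnonneg : 0 ≤ ∫ σ in 0..τ, d * Z σ :=
    intervalIntegral.integral_nonneg hτ fun σ _ => mul_nonneg hd (hZ0 σ)
  rw [hZ τ hτ, ← intervalIntegral.integral_const_mul]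
  exact Real.iSup_le (fun j => max_le (hgrowth j) hnonneg) hnonneg

/-- Comparison with the travelling exponential `ψ x t = B e^{l (x - s t - M)}`, which solves
`ψ_t = d (J * ψ - ψ) - (d (∫ J e^{l y} - 1) + l s) ψ`. Where `u > ψ` one has `ψ < B`, hence
`x - s t < M`, so the bound on `R` applies there. -/
theorem le_mul_exp_of_reaction_le {d s l M B : ℝ} {J : ℝ → ℝ} {u R : ℝ → ℝ → ℝ}
    (hd : 0 ≤ d) (hs : 0 ≤ s) (hl : 0 < l) (hB : 0 < B) (hJ : KernelGood J)
    (hu : ContinuousOn (fun p : ℝ × ℝ => u p.1 p.2) (univ ×ˢ Ici 0))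
    (huB : ∀ x t, 0 ≤ t → u x t ≤ B) (hu0 : ∀ x ≤ M, u x 0 = 0)
    (hderiv : ∀ x t, 0 < t → HasDerivAt (fun τ => u x τ)
      (d * ((∫ y, J (x - y) * u y t) - u x t) + R x t) t)
    (hR : ∀ x t, 0 < t → x - s * t < M →
      R x t ≤ -(d * ((∫ y, J y * exp (l * y)) - 1) + l * s) * u x t)
    (x : ℝ) {t : ℝ} (ht : 0 ≤ t) : u x t ≤ B * exp (l * (x - s * t - M)) := by
  set A := ∫ y, J y * exp (l * y)
  set ψ : ℝ → ℝ → ℝ := fun x t => B * exp (l * (x - s * t - M))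
  have hψ0 : ∀ x t, 0 < ψ x t := fun x t => by positivity
  have hψ' : ∀ x τ, HasDerivAt (ψ x) (-(l * s) * ψ x τ) τ := fun x τ => by
    have := (((hasDerivAt_id τ).const_mul s).const_sub x |>.sub_const M |>.const_mul l).exp
      |>.const_mul B
    exact this.congr_deriv (by simp only [ψ, id]; ring)
  have hψ_lt : ∀ x τ, 0 ≤ τ → ψ x τ < u x τ → x - s * τ < M := fun x τ hτ hlt => by
    have : exp (l * (x - s * τ - M)) < 1 := by
      have := hlt.trans_le (huB x τ hτ)
      simp only [ψ] at this
      nlinarith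
    nlinarith [exp_lt_one_iff.1 this]
  have hut : ∀ x, ContinuousOn (fun τ => u x τ) (Ici 0) := fun x =>
    hu.comp (continuous_const.prodMk continuous_id).continuousOn fun τ hτ => ⟨trivial, hτ⟩
  have hux : ∀ τ, 0 ≤ τ → Continuous fun x => u x τ := fun τ hτ =>
    hu.comp_continuous (continuous_id.prodMk continuous_const) fun x => ⟨trivial, hτ⟩
  suffices u x t - ψ x t ≤ 0 by linarith
  refine nonpos_of_hasDerivAt_le_mul_iSup (g := fun x τ => u x τ - ψ x τ) (B := B) hd
    (fun x => (hut x).sub (by fun_prop)) (fun x τ hτ => by linarith [huB x τ hτ, hψ0 x τ])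
    (fun x => ?_) (fun x τ hτ => (hderiv x τ hτ).sub (hψ' x τ)) (fun x τ hτ hpos => ?_) x ht
  · rcases le_or_gt x M with hx | hx
    · simp only [hu0 x hx]; linarith [hψ0 x 0]
    · have : B ≤ ψ x 0 := le_mul_of_one_le_right hB.le (one_le_exp (by nlinarith))
      linarith [huB x 0 le_rfl]
  · set Z := ⨆ y, max (u y τ - ψ y τ) 0
    have hbdd : BddAbove (range fun y => max (u y τ - ψ y τ) 0) :=
      ⟨B, by rintro _ ⟨y, rfl⟩; exact max_le (by linarith [huB y τ hτ.le, hψ0 y τ]) hB.le⟩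
    have hconv : ∫ y, J (x - y) * u y τ ≤ A * ψ x τ + Z := by
      have := hJ.integral_comp_sub_mul_le (hux τ hτ.le) (C := B) (l := l) (m := s * τ + M)
        (c := Z) (fun y => by
          rw [← sub_sub]
          linarith [(le_max_left _ _).trans (le_ciSup hbdd y)]) x
      rwa [← sub_sub] at this
    have hA : 1 ≤ A := hJ.one_le_integral_mul_exp l
    have hRx := hR x τ hτ (hψ_lt x τ hτ.le (sub_pos.1 hpos))
    nlinarith [mul_le_mul_of_nonneg_left hconv hd, mul_nonneg (mul_nonneg hd (sub_nonneg.2 hA))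
      hpos.le, mul_nonneg hd hpos.le, mul_nonneg (mul_nonneg hl.le hs) hpos.le]

theorem exists_le_mul_exp_of_reaction_le {d s M B κ : ℝ} {J : ℝ → ℝ} {u R : ℝ → ℝ → ℝ}
    (hd : 0 ≤ d) (hs : 0 ≤ s) (hB : 0 < B) (hκ : 0 < κ) (hJ : KernelGood J)
    (hu : ContinuousOn (fun p : ℝ × ℝ => u p.1 p.2) (univ ×ˢ Ici 0))
    (hub : ∀ x t, 0 ≤ t → 0 ≤ u x t ∧ u x t ≤ B) (hu0 : ∀ x ≤ M, u x 0 = 0)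
    (hderiv : ∀ x t, 0 < t → HasDerivAt (fun τ => u x τ)
      (d * ((∫ y, J (x - y) * u y t) - u x t) + R x t) t)
    (hR : ∀ x t, 0 < t → x - s * t < M → R x t ≤ -κ * u x t) :
    ∃ l, 0 < l ∧ ∀ x t, 0 ≤ t → u x t ≤ B * exp (l * (x - s * t - M)) := by
  obtain ⟨l, hl, hlκ⟩ := hJ.exists_pos_rate_le d s hκ
  refine ⟨l, hl, fun x t ht => le_mul_exp_of_reaction_le hd hs hl hB hJ hu
    (fun x t ht => (hub x t ht).2) hu0 hderiv (fun x t ht hx => ?_) x ht⟩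
  nlinarith [hR x t ht hx, mul_le_mul_of_nonneg_right hlκ (hub x t ht.le).1]

theorem mul_exp_le_of_le_log_div {B l ε z : ℝ} (hB : 0 < B) (hl : 0 < l) (hε : 0 < ε)
    (hz : z ≤ log (ε / B) / l) : B * exp (l * z) ≤ ε := by
  have : exp (l * z) ≤ ε / B := by
    rw [← exp_log (div_pos hε hB)]
    exact exp_le_exp.2 (by rwa [le_div_iff₀' hl] at hz)
  rwa [le_div_iff₀' hB] at this

theorem exists_forall_le_of_le_mul_exp {f : ℝ → ℝ → ℝ} {B l s M ζ : ℝ} (hB : 0 < B)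
    (hl : 0 < l) (hζ : 0 < ζ) (hf : ∀ x t, 0 ≤ t → f x t ≤ B * exp (l * (x - s * t - M)))
    {ε : ℝ} (hε : 0 < ε) : ∃ T, ∀ t ≥ T, ∀ x ≤ (s - ζ) * t, f x t ≤ ε := by
  refine ⟨max 0 ((|M| + |log (ε / B) / l|) / ζ), fun t ht x hx => ?_⟩
  have ht0 : 0 ≤ t := (le_max_left _ _).trans ht
  have hζt : |M| + |log (ε / B) / l| ≤ ζ * t := by
    rw [← div_le_iff₀' hζ]; exact (le_max_right _ _).trans ht
  refine (hf x t ht0).trans (mul_exp_le_of_le_log_div hB hl hε ?_)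
  linarith [neg_abs_le M, neg_abs_le (log (ε / B) / l)]

theorem AlphaGood.exists_forall_le_neg {α : ℝ → ℝ} (hα : AlphaGood α) :
    ∃ M δ, 0 < δ ∧ ∀ z ≤ M, α z ≤ -δ := by
  obtain ⟨L, hL, hlim⟩ := hα.2.2.1
  obtain ⟨M, hM⟩ :=
    eventually_atBot.1 (hlim.eventually (eventually_le_nhds (by linarith : L < L / 2)))
  exact ⟨M, -(L / 2), by linarith, fun z hz => by linarith [hM z hz]⟩

namespace IsSolPP

variable {d₁ d₂ r₁ r₂ a b s : ℝ} {J₁ J₂ α u₀ v₀ : ℝ → ℝ} {u v : ℝ → ℝ → ℝ}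

theorem prey_le_exp (hsol : IsSolPP d₁ d₂ r₁ r₂ a b s J₁ J₂ α u₀ v₀ u v) (hd₁ : 0 ≤ d₁)
    (hr₁ : 0 < r₁) (ha : 0 ≤ a) (hs : 0 ≤ s) (hJ₁ : KernelGood J₁) (hα : AlphaGood α) {K : ℝ}
    (hK : ∀ x ≤ K, u₀ x = 0) :
    ∃ l M, 0 < l ∧ ∀ x t, 0 ≤ t → u x t ≤ 1 * exp (l * (x - s * t - M)) := by
  obtain ⟨huc, -, hub, hvb, hu0, -, hud, -⟩ := hsol
  obtain ⟨M, δ, hδ, hαM⟩ := hα.exists_forall_le_neg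
  have hR : ∀ x t, 0 < t → x - s * t < min K M →
      r₁ * u x t * (α (x - s * t) - u x t - a * v x t) ≤ -(r₁ * δ) * u x t := by
    intro x t ht hx
    have hrate : α (x - s * t) - u x t - a * v x t ≤ -δ := by
      nlinarith [hαM _ (hx.le.trans (min_le_right _ _)), mul_nonneg ha (hvb x t ht.le).1,
        (hub x t ht.le).1]
    nlinarith [mul_le_mul_of_nonneg_left hrate (mul_nonneg hr₁.le (hub x t ht.le).1)]
  obtain ⟨l, hl, hu⟩ := exists_le_mul_exp_of_reaction_le hd₁ hs one_pos (mul_pos hr₁ hδ) hJ₁ huc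
    hub (fun x hx => (hu0 x).trans (hK x (hx.trans (min_le_left _ _)))) hud hR
  exact ⟨l, min K M, hl, hu⟩

theorem predator_le_exp (hsol : IsSolPP d₁ d₂ r₁ r₂ a b s J₁ J₂ α u₀ v₀ u v) (hd₂ : 0 ≤ d₂)
    (hr₂ : 0 < r₂) (hb : 1 < b) (hs : 0 ≤ s) (hJ₂ : KernelGood J₂) {M : ℝ}
    (hM : ∀ x ≤ M, v₀ x = 0) (hu : ∀ x t, 0 < t → x - s * t < M → b * u x t ≤ 1 / 2) :
    ∃ l, 0 < l ∧ ∀ x t, 0 ≤ t → v x t ≤ (b - 1) * exp (l * (x - s * t - M)) := by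
  obtain ⟨-, hvc, -, hvb, -, hv0, -, hvd⟩ := hsol
  refine exists_le_mul_exp_of_reaction_le hd₂ hs (by linarith) (half_pos hr₂) hJ₂ hvc hvb
    (fun x hx => (hv0 x).trans (hM x hx)) hvd fun x t ht hx => ?_
  have hv := (hvb x t ht.le).1
  nlinarith [mul_le_mul_of_nonneg_left (hu x t ht hx) (mul_nonneg hr₂.le hv), mul_nonneg hr₂.le hv]

end IsSolPP

theorem vanishing_behind_front_nonlocal_general
    (d₁ d₂ r₁ r₂ a b s : ℝ)
    (hd₁ : 0 < d₁) (hd₂ : 0 < d₂) (hr₁ : 0 < r₁) (hr₂ : 0 < r₂)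
    (ha : 0 < a) (hb : 1 < b) (hs : 0 < s)
    (J₁ J₂ α : ℝ → ℝ)
    (hJ₁ : KernelGood J₁) (hJ₂ : KernelGood J₂) (hα : AlphaGood α)
    (u₀ v₀ : ℝ → ℝ)
    (K₁ : ℝ) (hK₁ : ∀ x ≤ K₁, u₀ x = 0 ∧ v₀ x = 0)
    (u v : ℝ → ℝ → ℝ)
    (hsol : IsSolPP d₁ d₂ r₁ r₂ a b s J₁ J₂ α u₀ v₀ u v) :
    ∀ ζ > (0:ℝ),
      (s ≤ minSpeed d₁ r₁ J₁ →
        ∀ ε > (0:ℝ), ∃ T : ℝ, ∀ t ≥ T, ∀ x ≤ (s - ζ) * t, u x t ≤ ε) ∧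
      (s ≤ minSpeed d₂ (r₂ * (b - 1)) J₂ →
        ∀ ε > (0:ℝ), ∃ T : ℝ, ∀ t ≥ T, ∀ x ≤ (s - ζ) * t, v x t ≤ ε) := by
  obtain ⟨l₁, M₁, hl₁, hu⟩ :=
    hsol.prey_le_exp hd₁.le hr₁ ha.le hs.le hJ₁ hα fun x hx => (hK₁ x hx).1
  set M₂ := min K₁ (M₁ + log (1 / (2 * b)) / l₁)
  have hu_small : ∀ x t, 0 < t → x - s * t < M₂ → b * u x t ≤ 1 / 2 := fun x t ht hx => by
    have hlog : x - s * t - M₁ ≤ log (1 / (2 * b) / 1) / l₁ := by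
      rw [div_one]; linarith [min_le_right K₁ (M₁ + log (1 / (2 * b)) / l₁)]
    have := (hu x t ht.le).trans (mul_exp_le_of_le_log_div one_pos hl₁ (by positivity) hlog)
    rw [le_div_iff₀ (by positivity)] at this
    linarith
  obtain ⟨l₂, hl₂, hv⟩ := hsol.predator_le_exp hd₂.le hr₂ hb hs.le hJ₂
    (fun x hx => (hK₁ x (hx.trans (min_le_left _ _))).2) hu_small
  exact fun ζ hζ => ⟨fun _ ε hε => exists_forall_le_of_le_mul_exp one_pos hl₁ hζ hu hε,
    fun _ ε hε => exists_forall_le_of_le_mul_exp (by linarith) hl₂ hζ hv hε⟩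

/-- Theorem 4.3 (i): vanishing behind the climate front, nonlocal case. -/
theorem vanishing_behind_front_nonlocal
    (d₁ d₂ r₁ r₂ a b s : ℝ)
    (hd₁ : 0 < d₁) (hd₂ : 0 < d₂) (hr₁ : 0 < r₁) (hr₂ : 0 < r₂)
    (ha : 0 < a) (hb : 1 < b) (hs : 0 < s)
    (J₁ J₂ α : ℝ → ℝ)
    (hJ₁ : KernelGood J₁) (hJ₂ : KernelGood J₂) (hα : AlphaGood α)
    (u₀ v₀ : ℝ → ℝ)
    (hu₀c : Continuous u₀) (hu₀b : ∀ x, 0 ≤ u₀ x ∧ u₀ x ≤ 1)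
    (hv₀c : Continuous v₀) (hv₀b : ∀ x, 0 ≤ v₀ x ∧ v₀ x ≤ b - 1)
    (K₁ : ℝ) (hK₁ : ∀ x ≤ K₁, u₀ x = 0 ∧ v₀ x = 0)
    (u v : ℝ → ℝ → ℝ)
    (hsol : IsSolPP d₁ d₂ r₁ r₂ a b s J₁ J₂ α u₀ v₀ u v) :
    ∀ ζ > (0:ℝ),
      (s ≤ minSpeed d₁ r₁ J₁ →
        ∀ ε > (0:ℝ), ∃ T : ℝ, ∀ t ≥ T, ∀ x ≤ (s - ζ) * t, u x t ≤ ε) ∧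
      (s ≤ minSpeed d₂ (r₂ * (b - 1)) J₂ →
        ∀ ε > (0:ℝ), ∃ T : ℝ, ∀ t ≥ T, ∀ x ≤ (s - ζ) * t, v x t ≤ ε) :=
  vanishing_behind_front_nonlocal_general d₁ d₂ r₁ r₂ a b s hd₁ hd₂ hr₁ hr₂ ha hb hs J₁ J₂ α hJ₁ hJ₂
    hα u₀ v₀ K₁ hK₁ u v hsol
end
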